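/- Let f : ℝⁿ → ℝ^d be any function, w ∈ ℝ^d, b ∈ ℝ, and let Σ be a positive semidefinite d×d matrix with wᵀΣw > 0. Let z be distributed as the centered multivariate Gaussian measure N(0, Σ) on ℝ^d, and define h(x) = wᵀ(f(x) + z) + b and margin m_h(x, y) = y·h(x). Fix x ∈ ℝⁿ, y ∈ {−1, 1}, p ∈ [1, ∞], ε ≥ 0, and Δ ≥ 0 such that |(wᵀf(x) + b) − (wᵀf(x + δ) + b)| ≤ Δ for every δ with ‖δ‖_p ≤ ε. Then the adversarial gap G_{p,ε}^h(x, y) := sup_{δ : ‖δ‖_p ≤ ε} P(m_h(x + δ, y) ≤ 0) − P(m_h(x, y) ≤ 0) satisfies G_{p,ε}^h(x, y) ≤ Δ / √(2π · wᵀΣw). -/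

import Mathlib

open MeasureTheory ProbabilityTheory Matrix
open scoped ENNReal

/-- The standard multivariate Gaussian `N(0, I_d)` on `ℝ^d`, as the product of `d`
standard real Gaussians. -/
noncomputable def stdGaussianPi (d : ℕ) : Measure (Fin d → ℝ) :=
  Measure.pi fun _ => gaussianReal 0 1

/-- The centered multivariate Gaussian `N(0, Σ)` on `ℝ^d` with positive semidefinite
covariance matrix `Σ`, as the pushforward of the standard Gaussian under `√Σ`. -/
noncomputable def multivariateGaussian {d : ℕ} {S : Matrix (Fin d) (Fin d) ℝ}
    (hS : S.PosSemidef) : Measure (Fin d → ℝ) :=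
  (stdGaussianPi d).map (fun u => (hS.1.eigenvectorUnitary.1 *
    diagonal ((↑) ∘ (√·) ∘ hS.1.eigenvalues) *
    (star hS.1.eigenvectorUnitary : Matrix (Fin d) (Fin d) ℝ)) *ᵥ u)

/-- The cumulative distribution function `Φ` of the standard real Gaussian:
`Φ t = (1/√(2π)) ∫_{-∞}^{t} exp (-s²/2) ds`. -/
noncomputable def stdGaussianCDF (t : ℝ) : ℝ :=
  (Real.sqrt (2 * Real.pi))⁻¹ * ∫ s in Set.Iic t, Real.exp (-s ^ 2 / 2)

/-!
Only the one-dimensional marginal of the noise matters: the Gaussian above is Mathlib's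
`multivariateGaussian 0 S` read in coordinates, so `w ⬝ᵥ z ~ N(0, wᵀSw)`. Replacing `w` by `y • w`
(which keeps `wᵀSw` as `y² = 1`), each misclassification event is a half-line `{w ⬝ᵥ z ≤ t}`
whose endpoint moves by at most `Δ` under an admissible perturbation, and the density of
`N(0, wᵀSw)` is bounded by `1 / √(2π wᵀSw)`.
-/

open Real Set
open scoped MatrixOrder NNReal

lemma Matrix.PosSemidef.cfcSqrt_eq {d : ℕ} {S : Matrix (Fin d) (Fin d) ℝ} (hS : S.PosSemidef) :
    CFC.sqrt S = hS.1.eigenvectorUnitary.1 * diagonal ((↑) ∘ (√·) ∘ hS.1.eigenvalues) *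
      (star hS.1.eigenvectorUnitary : Matrix (Fin d) (Fin d) ℝ) := by
  rw [CFC.sqrt_eq_real_sqrt S hS.nonneg, cfcₙ_eq_cfc, hS.1.cfc_eq, IsHermitian.cfc,
    Unitary.conjStarAlgAut_apply]
  rfl

lemma multivariateGaussian_eq_map_ofLp {d : ℕ} {S : Matrix (Fin d) (Fin d) ℝ}
    (hS : S.PosSemidef) :
    _root_.multivariateGaussian hS = (ProbabilityTheory.multivariateGaussian 0 S).map
      (WithLp.ofLp : EuclideanSpace ℝ (Fin d) → Fin d → ℝ) := by
  rw [_root_.multivariateGaussian, ← hS.cfcSqrt_eq, ProbabilityTheory.multivariateGaussian,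
    ← map_pi_eq_stdGaussian, Measure.map_map (by fun_prop) (by fun_prop),
    Measure.map_map (by fun_prop) (by fun_prop), stdGaussianPi]
  congr 1
  ext u i
  simp [toEuclideanCLM_toLp]

lemma ProbabilityTheory.multivariateGaussian_map_inner {ι : Type*} [Fintype ι] [DecidableEq ι]
    {S : Matrix ι ι ℝ} (hS : S.PosSemidef) (μ v : EuclideanSpace ℝ ι) :
    (multivariateGaussian μ S).map (fun x => inner ℝ v x) =
      gaussianReal (inner ℝ v μ) (v ⬝ᵥ S *ᵥ v).toNNReal := by
  have hL : (fun x => inner ℝ v x) = ⇑(innerSL ℝ v) := rfl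
  rw [hL, IsGaussian.map_eq_gaussianReal]
  congr 2
  · rw [ContinuousLinearMap.integral_comp_id_comm IsGaussian.integrable_id,
      integral_id_multivariateGaussian]
    rfl
  · rw [← covarianceBilin_multivariateGaussian hS (μ := μ),
      covarianceBilin_self IsGaussian.memLp_two_id]
    rfl

lemma multivariateGaussian_map_dotProduct {d : ℕ} {S : Matrix (Fin d) (Fin d) ℝ}
    (hS : S.PosSemidef) (v : Fin d → ℝ) :
    (_root_.multivariateGaussian hS).map (v ⬝ᵥ ·) = gaussianReal 0 (v ⬝ᵥ S *ᵥ v).toNNReal := by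
  have hv : (v ⬝ᵥ ·) ∘ WithLp.ofLp =
      fun x : EuclideanSpace ℝ (Fin d) => inner ℝ (WithLp.toLp 2 v) x := by
    ext x
    simp [EuclideanSpace.inner_eq_star_dotProduct, dotProduct_comm v]
  rw [multivariateGaussian_eq_map_ofLp, Measure.map_map (by fun_prop) (by fun_prop), hv,
    multivariateGaussian_map_inner hS]
  simp

lemma gaussianReal_le_mul_volume (m : ℝ) {v : ℝ≥0} (hv : v ≠ 0) (A : Set ℝ) :
    gaussianReal m v A ≤ ENNReal.ofReal (√(2 * π * v))⁻¹ * volume A := by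
  rw [gaussianReal_apply m hv, ← setLIntegral_const]
  refine lintegral_mono fun x => ENNReal.ofReal_le_ofReal ?_
  rw [gaussianPDFReal_def]
  refine mul_le_of_le_one_right (by positivity) (exp_le_one_iff.2 ?_)
  exact div_nonpos_of_nonpos_of_nonneg (neg_nonpos.2 (sq_nonneg _)) (by positivity)

lemma gaussianReal_real_Iic_sub_le (m : ℝ) {v : ℝ≥0} (hv : v ≠ 0) (s t : ℝ) :
    (gaussianReal m v).real (Iic t) - (gaussianReal m v).real (Iic s) ≤ |t - s| / √(2 * π * v) := by
  rcases le_total t s with hts | hst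
  · have hmono := measureReal_mono (μ := gaussianReal m v) (Iic_subset_Iic.2 hts)
    have hrhs : 0 ≤ |t - s| / √(2 * π * v) := by positivity
    linarith
  · rw [← measureReal_sdiff (Iic_subset_Iic.2 hst) measurableSet_Iic, Iic_sdiff_Iic,
      abs_of_nonneg (sub_nonneg.2 hst), div_eq_inv_mul]
    have h := gaussianReal_le_mul_volume m hv (Ioc s t)
    rw [Real.volume_Ioc, ← ENNReal.ofReal_mul (by positivity)] at h
    exact ENNReal.toReal_le_of_le_ofReal (by positivity) h

lemma toReal_multivariateGaussian_margin_nonpos {d : ℕ} {S : Matrix (Fin d) (Fin d) ℝ}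
    (hS : S.PosSemidef) (w a : Fin d → ℝ) (b y : ℝ) :
    (_root_.multivariateGaussian hS {z | y * (w ⬝ᵥ (a + z) + b) ≤ 0}).toReal =
      (gaussianReal 0 ((y • w) ⬝ᵥ S *ᵥ (y • w)).toNNReal).real (Iic (-(y * (w ⬝ᵥ a + b)))) := by
  rw [← multivariateGaussian_map_dotProduct hS, measureReal_def,
    Measure.map_apply (by fun_prop) measurableSet_Iic]
  congr 2
  ext z
  simp only [mem_ofPred_eq, mem_preimage, mem_Iic, dotProduct_add, smul_dotProduct, smul_eq_mul]
  constructor <;> intro h <;> linarith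

theorem statement1_general {n d : ℕ} (p : ℝ≥0∞)
    (f : PiLp p (fun _ : Fin n => ℝ) → (Fin d → ℝ)) (w : Fin d → ℝ) (b : ℝ)
    (S : Matrix (Fin d) (Fin d) ℝ) (hS : S.PosSemidef)
    (hw : 0 < w ⬝ᵥ (S *ᵥ w))
    (x : PiLp p (fun _ : Fin n => ℝ)) (y : ℝ) (hy : y = -1 ∨ y = 1)
    (ε : ℝ) (Δ : ℝ) (hΔ : 0 ≤ Δ)
    (hrobust : ∀ δ : PiLp p (fun _ : Fin n => ℝ), ‖δ‖ ≤ ε →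
      |(w ⬝ᵥ f x + b) - (w ⬝ᵥ f (x + δ) + b)| ≤ Δ) :
    (⨆ δ : {δ : PiLp p (fun _ : Fin n => ℝ) // ‖δ‖ ≤ ε},
        (multivariateGaussian hS {z | y * (w ⬝ᵥ (f (x + δ.1) + z) + b) ≤ 0}).toReal) -
      (multivariateGaussian hS {z | y * (w ⬝ᵥ (f x + z) + b) ≤ 0}).toReal ≤
    Δ / Real.sqrt (2 * Real.pi * (w ⬝ᵥ (S *ᵥ w))) := by
  have hV : (w ⬝ᵥ S *ᵥ w).toNNReal ≠ 0 := by simpa using hw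
  have hy_abs : |y| = 1 := by rcases hy with rfl | rfl <;> simp
  have hyw : (y • w) ⬝ᵥ S *ᵥ (y • w) = w ⬝ᵥ S *ᵥ w := by
    rw [mulVec_smul, dotProduct_smul, smul_dotProduct, smul_smul, ← abs_mul_abs_self, hy_abs,
      one_mul, one_smul]
  simp_rw [toReal_multivariateGaussian_margin_nonpos, hyw]
  rw [sub_le_iff_le_add]
  refine Real.iSup_le (fun δ => ?_) (by positivity)
  rw [← sub_le_iff_le_add]
  refine (gaussianReal_real_Iic_sub_le 0 hV _ _).trans ?_
  rw [Real.coe_toNNReal _ hw.le]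
  gcongr
  calc |-(y * (w ⬝ᵥ f (x + δ.1) + b)) - -(y * (w ⬝ᵥ f x + b))|
      = |y| * |(w ⬝ᵥ f x + b) - (w ⬝ᵥ f (x + δ.1) + b)| := by rw [← abs_mul]; ring_nf
    _ ≤ Δ := by rw [hy_abs, one_mul]; exact hrobust δ.1 δ.2

theorem statement1 {n d : ℕ} (p : ℝ≥0∞) (hp : 1 ≤ p)
    (f : PiLp p (fun _ : Fin n => ℝ) → (Fin d → ℝ)) (w : Fin d → ℝ) (b : ℝ)
    (S : Matrix (Fin d) (Fin d) ℝ) (hS : S.PosSemidef)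
    (hw : 0 < w ⬝ᵥ (S *ᵥ w))
    (x : PiLp p (fun _ : Fin n => ℝ)) (y : ℝ) (hy : y = -1 ∨ y = 1)
    (ε : ℝ) (hε : 0 ≤ ε) (Δ : ℝ) (hΔ : 0 ≤ Δ)
    (hrobust : ∀ δ : PiLp p (fun _ : Fin n => ℝ), ‖δ‖ ≤ ε →
      |(w ⬝ᵥ f x + b) - (w ⬝ᵥ f (x + δ) + b)| ≤ Δ) :
    (⨆ δ : {δ : PiLp p (fun _ : Fin n => ℝ) // ‖δ‖ ≤ ε},
        (multivariateGaussian hS {z | y * (w ⬝ᵥ (f (x + δ.1) + z) + b) ≤ 0}).toReal) -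
      (multivariateGaussian hS {z | y * (w ⬝ᵥ (f x + z) + b) ≤ 0}).toReal ≤
    Δ / Real.sqrt (2 * Real.pi * (w ⬝ᵥ (S *ᵥ w))) :=
  statement1_general p f w b S hS hw x y hy ε Δ hΔ hrobust
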